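/- arXiv:2403.18574 — 2 statements merged into one kernel-verified Lean document; each statement's English description precedes it below -/
import Mathlib

section
/- For every f ∈ F and every i ≥ 1, i ∈ L(f) if and only if i+1 ∈ R(α(f)). Consequently α maps F into A = {g : 1 ∉ R(g)} and β maps F into B = {g : 1 ∈ R(g)}. -/
open scoped Classical

noncomputable section

/-- `f` is a frequency sequence: `f 0 = 0` and finite support. -/
def IsFreq (f : ℕ → ℕ) : Prop := f 0 = 0 ∧ (Function.support f).Finite

/-- size `|f| = ∑ i·f i`. -/
def fsize (f : ℕ → ℕ) : ℕ := ∑ᶠ n, n * f n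

/-- length `ℓ(f) = ∑ f i`. -/
def flen (f : ℕ → ℕ) : ℕ := ∑ᶠ n, f n

/-- the support `S(f)`. -/
def suppF (f : ℕ → ℕ) : Set ℕ := {i | 1 ≤ i ∧ f i ≠ 0}

/-- `[i,j]` is a spread of `f`: a maximal interval contained in the support. -/
def IsSpread (f : ℕ → ℕ) (i j : ℕ) : Prop :=
  1 ≤ i ∧ i ≤ j ∧ (∀ k, i ≤ k → k ≤ j → f k ≠ 0) ∧ (i = 1 ∨ f (i - 1) = 0) ∧ f (j + 1) = 0

/-- `L(f)`: every other element of each spread, starting from the left end. -/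
def Lset (f : ℕ → ℕ) : Set ℕ :=
  {q | ∃ i j, IsSpread f i j ∧ i ≤ q ∧ q ≤ j ∧ (q - i) % 2 = 0}

/-- `R(f)`: every other element of each spread, starting from the right end. -/
def Rset (f : ℕ → ℕ) : Set ℕ :=
  {q | ∃ i j, IsSpread f i j ∧ i ≤ q ∧ q ≤ j ∧ (j - q) % 2 = 0}

/-- the 2-measure, as the cardinality of `R(f)`. -/
def mu2 (f : ℕ → ℕ) : ℕ := (Rset f).ncard

/-- The Burge demotion operator `∂`. -/
def dB (f : ℕ → ℕ) : ℕ → ℕ := fun n =>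
  if n = 0 then 0
  else f n - (if n ∈ Rset f then 1 else 0) + (if n + 1 ∈ Rset f then 1 else 0)

/-- The promotion operator `α`. -/
def aB (f : ℕ → ℕ) : ℕ → ℕ := fun n =>
  if n = 0 then 0
  else f n - (if n ∈ Lset f then 1 else 0) + (if n - 1 ∈ Lset f then 1 else 0)

/-- the shift `(f₂, f₃, …)`; on partitions this is `P ↦ P - 1`. -/
def tailF (f : ℕ → ℕ) : ℕ → ℕ := fun n => if n = 0 then 0 else f (n + 1)

/-- The operator `β`: `β(f) = (f₁ + 1, α(f₂, f₃, …))`. -/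
def bB (f : ℕ → ℕ) : ℕ → ℕ := fun n =>
  if n = 0 then 0 else if n = 1 then f 1 + 1 else aB (tailF f) (n - 1)

/-- the zero sequence (empty partition). -/
def zeroF : ℕ → ℕ := fun _ => 0

/-- `k` minimal with `∂^[k] f = 0`. -/
def chainK (f : ℕ → ℕ) : ℕ :=
  if h : ∃ m, dB^[m] f = zeroF then Nat.find h else 0

/-- The Burge code of `f`, as a list of letters; `false` = `a`, `true` = `b`.
The `i`-th letter (0-indexed `i`) records whether `∂^[i] f ∈ B`, i.e. `1 ∈ R(∂^[i] f)`. -/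
def burgeCode (f : ℕ → ℕ) : List Bool :=
  (List.range (chainK f + 1)).map fun i => if 1 ∈ Rset (dB^[i] f) then true else false

/-- descent set of a word: 1-indexed positions `i` with `ωᵢ = b`, `ω_{i+1} = a`. -/
def descSet (w : List Bool) : Set ℕ :=
  {i | 1 ≤ i ∧ w[i - 1]? = some true ∧ w[i]? = some false}

/-- the descent set of (the Burge code of) a partition. -/
def DesSet (f : ℕ → ℕ) : Set ℕ := descSet (burgeCode f)

/-- `Des(P)` regarded as a partition, via its frequency sequence. -/
def desFreq (f : ℕ → ℕ) : ℕ → ℕ := fun i => if i ∈ DesSet f then 1 else 0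

/-- the 2-measure as the maximal size of a subset of the support without
consecutive pairs. -/
def twoMeasure (f : ℕ → ℕ) : ℕ :=
  sSup {n | ∃ T : Finset ℕ, (↑T : Set ℕ) ⊆ suppF f ∧ (∀ x ∈ T, x + 1 ∉ T) ∧ T.card = n}

/-- evaluation at `i`: `ν_i(f) = i f_i + (i+1) f_{i+1} + 2 ∑_{j>i+1} f_j`, with `ν₀ = ν₁`. -/
def nuI (f : ℕ → ℕ) (i : ℕ) : ℕ :=
  (max i 1) * f (max i 1) + (max i 1 + 1) * f (max i 1 + 1)
    + 2 * ∑ᶠ j ∈ {j : ℕ | max i 1 + 1 < j}, f j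

/-- annihilation at `i`: `ρ_i(f) = (f₁, …, f_{i-1}, f_{i+2}, f_{i+3}, …)`, with `ρ₀ = ρ₁`. -/
def rhoI (f : ℕ → ℕ) (i : ℕ) : ℕ → ℕ := fun n =>
  if n = 0 then 0 else if n < max i 1 then f n else f (n + 2)

/-- `i ≥ 1` is right admissible in `f`. -/
def RightAdm (f : ℕ → ℕ) (i : ℕ) : Prop :=
  1 ≤ i ∧ 0 < f i ∧ (0 < f (i + 1) ∨ (f (i - 1) = 0 ∧ f (i + 1) = 0))

/-- `i ≥ 0` is left admissible in `f`. -/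
def LeftAdm (f : ℕ → ℕ) (i : ℕ) : Prop :=
  0 < f (i + 1) ∧ (0 < f i ∨ (f i = 0 ∧ f (i + 2) = 0))

/-- `i` is a maximal index for `f`: `ν_i(f)` is nonzero and maximal. -/
def MaxIdx (f : ℕ → ℕ) (i : ℕ) : Prop :=
  nuI f i ≠ 0 ∧ ∀ j, nuI f j ≤ nuI f i

end

/-!
Within a spread, membership in `L` alternates starting from the left end and membership in `R`
alternates starting from the right end, so `q ∈ L(f)` iff `q ∈ S(f)` and `q - 1 ∉ L(f)`, and
`q ∈ R(f)` iff `q ∈ S(f)` and `q + 1 ∉ R(f)`. Since `α` raises the entry just right of each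
point of `L(f)`, while `α(f)ᵢ₊₁ = fᵢ₊₁ = 0` when neither `i` nor `i + 1` lies in `L(f)`, these
recursions make `i ∈ L(f) ↔ i + 1 ∈ R(α f)` propagate from large `i`, where both sides fail,
down to every `i`. Its case `i = 0` is `1 ∉ R(α f)`, and `β f` is `β(f)₁ ≠ 0` followed by a
shifted copy of `α(f₂, f₃, …)`, whence `1 ∈ R(β f)`.
-/

open Filter

theorem Nat.decreasing_induction_of_eventually {P : ℕ → Prop} (h : ∀ᶠ n in atTop, P n)
    (step : ∀ n, P (n + 1) → P n) (n : ℕ) : P n :=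
  Nat.decreasing_induction_of_infinite step
    (Nat.frequently_atTop_iff_infinite.1 h.frequently) n

theorem IsFreq.eventually_eq_zero {f : ℕ → ℕ} (hf : IsFreq f) : ∀ᶠ n in atTop, f n = 0 := by
  simpa only [Nat.cofinite_eq_atTop, Function.notMem_support] using
    hf.2.eventually_cofinite_notMem

section Spreads

variable {f : ℕ → ℕ} {i j i' j' q : ℕ}

theorem IsSpread.ne_zero (hs : IsSpread f i j) (hiq : i ≤ q) (hqj : q ≤ j) : f q ≠ 0 :=
  hs.2.2.1 q hiq hqj

theorem IsSpread.left_le (hs : IsSpread f i j) (hs' : IsSpread f i' j') (h : i' ≤ j) :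
    i' ≤ i := by
  by_contra! hlt
  rcases hs'.2.2.2.1 with h1 | h0
  · have := hs.1
    omega
  · exact hs.ne_zero (q := i' - 1) (by omega) (by omega) h0

theorem IsSpread.right_le (hs : IsSpread f i j) (hs' : IsSpread f i' j') (h : i ≤ j') :
    j ≤ j' := by
  by_contra! hlt
  exact hs.ne_zero (q := j' + 1) (by omega) (by omega) hs'.2.2.2.2

theorem IsSpread.eq_of_mem (hs : IsSpread f i j) (hs' : IsSpread f i' j')
    (hiq : i ≤ q) (hqj : q ≤ j) (hiq' : i' ≤ q) (hqj' : q ≤ j') : i = i' ∧ j = j' :=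
  ⟨le_antisymm (hs'.left_le hs (by omega)) (hs.left_le hs' (by omega)),
    le_antisymm (hs.right_le hs' (by omega)) (hs'.right_le hs (by omega))⟩

theorem exists_isSpread (hf : ∀ᶠ n in atTop, f n = 0) (hq : q ∈ suppF f) :
    ∃ i j, IsSpread f i j ∧ i ≤ q ∧ q ≤ j := by
  have hright : ∃ j, q ≤ j ∧ f (j + 1) = 0 := by
    obtain ⟨N, hN⟩ := eventually_atTop.1 hf
    exact ⟨q + N, by omega, hN _ (by omega)⟩
  have hleft : ∃ i, 1 ≤ i ∧ i ≤ q ∧ ∀ k, i ≤ k → k ≤ q → f k ≠ 0 :=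
    ⟨q, hq.1, le_rfl, fun k h1 h2 => le_antisymm h2 h1 ▸ hq.2⟩
  obtain ⟨hqj, hj⟩ := Nat.find_spec hright
  obtain ⟨hi1, hiq, hnz⟩ := Nat.find_spec hleft
  refine ⟨Nat.find hleft, Nat.find hright, ⟨hi1, by omega, fun k hik hkj hk => ?_, ?_, hj⟩,
    hiq, hqj⟩
  · rcases le_or_gt k q with hkq | hqk
    · exact hnz k hik hkq hk
    · exact Nat.find_min hright (m := k - 1) (by omega)
        ⟨by omega, by rwa [Nat.sub_add_cancel (by omega)]⟩
  · by_contra! hne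
    refine Nat.find_min hleft (m := Nat.find hleft - 1) (by omega)
      ⟨by omega, by omega, fun k hk1 hk2 => ?_⟩
    rcases hk1.eq_or_lt with rfl | hlt
    · exact hne.2
    · exact hnz k (by omega) hk2

theorem Lset_subset_suppF : Lset f ⊆ suppF f := fun _ ⟨_, _, hs, hiq, hqj, _⟩ =>
  ⟨hs.1.trans hiq, hs.ne_zero hiq hqj⟩

theorem Rset_subset_suppF : Rset f ⊆ suppF f := fun _ ⟨_, _, hs, hiq, hqj, _⟩ =>
  ⟨hs.1.trans hiq, hs.ne_zero hiq hqj⟩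

theorem notMem_Lset_of_eq_zero (hq : f q = 0) : q ∉ Lset f :=
  fun h => (Lset_subset_suppF h).2 hq

theorem notMem_Rset_of_eq_zero (hq : f q = 0) : q ∉ Rset f :=
  fun h => (Rset_subset_suppF h).2 hq

theorem zero_notMem_Lset : 0 ∉ Lset f := fun h => (Lset_subset_suppF h).1.not_gt zero_lt_one

theorem mem_Lset_iff (hf : ∀ᶠ n in atTop, f n = 0) :
    q ∈ Lset f ↔ q ∈ suppF f ∧ q - 1 ∉ Lset f := by
  constructor
  · intro hq
    refine ⟨Lset_subset_suppF hq, fun ⟨i', j', hs', hiq', hqj', hpar'⟩ => ?_⟩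
    obtain ⟨i, j, hs, hiq, hqj, hpar⟩ := hq
    rcases hiq.eq_or_lt with rfl | hlt
    · rcases hs.2.2.2.1 with h1 | h0
      · have := hs'.1
        omega
      · exact hs'.ne_zero hiq' hqj' h0
    · obtain ⟨rfl, -⟩ := hs.eq_of_mem hs' (q := q - 1) (by omega) (by omega) hiq' hqj'
      omega
  · rintro ⟨hq, hprev⟩
    obtain ⟨i, j, hs, hiq, hqj⟩ := exists_isSpread hf hq
    refine ⟨i, j, hs, hiq, hqj, ?_⟩
    by_contra hodd
    exact hprev ⟨i, j, hs, by omega, by omega, by omega⟩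

theorem mem_Rset_iff (hf : ∀ᶠ n in atTop, f n = 0) :
    q ∈ Rset f ↔ q ∈ suppF f ∧ q + 1 ∉ Rset f := by
  constructor
  · intro hq
    refine ⟨Rset_subset_suppF hq, fun ⟨i', j', hs', hiq', hqj', hpar'⟩ => ?_⟩
    obtain ⟨i, j, hs, hiq, hqj, hpar⟩ := hq
    rcases hqj.eq_or_lt with rfl | hlt
    · exact hs'.ne_zero hiq' hqj' hs.2.2.2.2
    · obtain ⟨-, rfl⟩ := hs.eq_of_mem hs' (q := q + 1) (by omega) (by omega) hiq' hqj'
      omega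
  · rintro ⟨hq, hnext⟩
    obtain ⟨i, j, hs, hiq, hqj⟩ := exists_isSpread hf hq
    refine ⟨i, j, hs, hiq, hqj, ?_⟩
    by_contra hodd
    exact hnext ⟨i, j, hs, by omega, by omega, by omega⟩

end Spreads

section Promotion

variable {f g h : ℕ → ℕ}

theorem aB_succ (f : ℕ → ℕ) (n : ℕ) :
    aB f (n + 1) =
      f (n + 1) - (if n + 1 ∈ Lset f then 1 else 0) + (if n ∈ Lset f then 1 else 0) := by
  simp [aB]

theorem eventually_aB_eq_zero (hf : ∀ᶠ n in atTop, f n = 0) : ∀ᶠ n in atTop, aB f n = 0 := by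
  filter_upwards [hf, (tendsto_sub_atTop_nat 1).eventually hf] with n hn hn1
  simp [aB, hn, notMem_Lset_of_eq_zero hn, notMem_Lset_of_eq_zero hn1]

theorem aB_succ_ne_zero_of_mem_Lset {n : ℕ} (hn : n ∈ Lset f) : aB f (n + 1) ≠ 0 := by
  simp [aB_succ, hn]

theorem aB_succ_eq_zero (hf : ∀ᶠ n in atTop, f n = 0) {n : ℕ} (hn : n ∉ Lset f)
    (hn1 : n + 1 ∉ Lset f) : aB f (n + 1) = 0 := by
  have hf1 : f (n + 1) = 0 := by
    by_contra hne
    exact hn1 ((mem_Lset_iff hf).2 ⟨⟨by omega, hne⟩, hn⟩)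
  simp [aB_succ, hn, hn1, hf1]

theorem mem_Lset_iff_succ_mem_Rset_aB (hf : ∀ᶠ n in atTop, f n = 0) (i : ℕ) :
    i ∈ Lset f ↔ i + 1 ∈ Rset (aB f) := by
  refine Nat.decreasing_induction_of_eventually
    (P := fun i => i ∈ Lset f ↔ i + 1 ∈ Rset (aB f)) ?_ (fun i ih => ?_) i
  · filter_upwards [hf, (tendsto_add_atTop_nat 1).eventually (eventually_aB_eq_zero hf)]
      with n hn hn1
    exact iff_of_false (notMem_Lset_of_eq_zero hn) (notMem_Rset_of_eq_zero hn1)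
  rw [mem_Rset_iff (eventually_aB_eq_zero hf), ← ih]
  by_cases hi : i ∈ Lset f
  · refine iff_of_true hi ⟨⟨by omega, aB_succ_ne_zero_of_mem_Lset hi⟩, fun hi1 => ?_⟩
    exact ((mem_Lset_iff hf).1 hi1).2 hi
  · exact iff_of_false hi fun ⟨hsupp, hi1⟩ => hsupp.2 (aB_succ_eq_zero hf hi hi1)

theorem one_notMem_Rset_aB (hf : ∀ᶠ n in atTop, f n = 0) : 1 ∉ Rset (aB f) :=
  fun h => zero_notMem_Lset ((mem_Lset_iff_succ_mem_Rset_aB hf 0).2 h)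

theorem succ_mem_Rset_iff_of_shift (hg : ∀ᶠ n in atTop, g n = 0) (hh : ∀ᶠ n in atTop, h n = 0)
    (hshift : ∀ n, 1 ≤ n → h (n + 1) = g n) {q : ℕ} (hq : 1 ≤ q) :
    q + 1 ∈ Rset h ↔ q ∈ Rset g := by
  refine Nat.decreasing_induction_of_eventually
    (P := fun q => 1 ≤ q → (q + 1 ∈ Rset h ↔ q ∈ Rset g)) ?_ (fun q ih hq => ?_) q hq
  · filter_upwards [hg, (tendsto_add_atTop_nat 1).eventually hh] with n hn hn1 _
    exact iff_of_false (notMem_Rset_of_eq_zero hn1) (notMem_Rset_of_eq_zero hn)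
  rw [mem_Rset_iff hh, mem_Rset_iff hg, ih (by omega)]
  simp [suppF, hshift q hq, hq]

theorem eventually_tailF_eq_zero (hf : ∀ᶠ n in atTop, f n = 0) :
    ∀ᶠ n in atTop, tailF f n = 0 := by
  filter_upwards [(tendsto_add_atTop_nat 1).eventually hf] with n hn
  simp [tailF, hn]

theorem bB_succ (f : ℕ → ℕ) {n : ℕ} (hn : 1 ≤ n) : bB f (n + 1) = aB (tailF f) n := by
  simp [bB, show n ≠ 0 by omega]

theorem one_mem_Rset_bB (hf : ∀ᶠ n in atTop, f n = 0) : 1 ∈ Rset (bB f) := by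
  have hα := eventually_aB_eq_zero (eventually_tailF_eq_zero hf)
  have hβ : ∀ᶠ n in atTop, bB f n = 0 := by
    filter_upwards [(tendsto_sub_atTop_nat 1).eventually hα, eventually_ge_atTop 2]
      with n hn h2
    obtain ⟨m, rfl⟩ : ∃ m, n = m + 1 := ⟨n - 1, by omega⟩
    rw [bB_succ f (by omega)]
    simpa using hn
  rw [mem_Rset_iff hβ, succ_mem_Rset_iff_of_shift hα hβ (fun n hn => bB_succ f hn) le_rfl]
  exact ⟨⟨le_rfl, by simp [bB]⟩, one_notMem_Rset_aB (eventually_tailF_eq_zero hf)⟩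

end Promotion

/-- for every `i ≥ 1`, `i ∈ L(f)` iff `i+1 ∈ R(α(f))`; consequently
`α` maps into `A` and `β` maps into `B`. -/
theorem stmt3 (f : ℕ → ℕ) (hf : IsFreq f) :
    (∀ i, 1 ≤ i → (i ∈ Lset f ↔ i + 1 ∈ Rset (aB f))) ∧
    1 ∉ Rset (aB f) ∧ 1 ∈ Rset (bB f) :=
  ⟨fun i _ => mem_Lset_iff_succ_mem_Rset_aB hf.eventually_eq_zero i,
    one_notMem_Rset_aB hf.eventually_eq_zero, one_mem_Rset_bB hf.eventually_eq_zero⟩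
end

section
/- If the Burge code of f is ω₁ω₂...ω_n, then the Burge code of ∂f is ω₂...ω_n; consequently Des(∂P) = (Des(P) − 1) \ {0}, i.e., the descent map satisfies Des(∂P) = Des(P) − 1 where subtracting 1 from a partition means subtracting 1 from each part and deleting zeros. -/
open scoped Classical

/-! ∂ moves one unit of `f` from each `n ∈ R(f)` down to `n - 1`, so `|∂f| = |f| - μ₂(f)`, and
`μ₂(f) > 0` for `f ≠ 0`. Hence the iterates of ∂ reach `0`, the demotion chain of `∂f` is that of
`f` with its first term removed, and so is its Burge code; dropping the first letter of a word
shifts its descents down by one. -/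

open Finset

lemma Finset.sum_range_succ_eq_sum_range {M : Type*} [AddCommMonoid M] {g : ℕ → M} {N : ℕ}
    (h0 : g 0 = 0) (hN : g N = 0) : ∑ n ∈ range N, g (n + 1) = ∑ n ∈ range N, g n := by
  have h := (sum_range_succ' g N).symm.trans (sum_range_succ g N)
  rwa [h0, hN, add_zero, add_zero] at h

section Demotion

variable {f : ℕ → ℕ}

lemma one_le_and_ne_zero_of_mem_Rset {n : ℕ} (h : n ∈ Rset f) : 1 ≤ n ∧ f n ≠ 0 := by
  obtain ⟨i, j, ⟨hi, -, hsupp, -, -⟩, hin, hnj, -⟩ := h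
  exact ⟨hi.trans hin, hsupp n hin hnj⟩

lemma exists_spread_left_end {j : ℕ} (hj : 1 ≤ j) (hfj : f j ≠ 0) :
    ∃ i, 1 ≤ i ∧ i ≤ j ∧ (∀ k, i ≤ k → k ≤ j → f k ≠ 0) ∧ (i = 1 ∨ f (i - 1) = 0) := by
  induction j with
  | zero => omega
  | succ j ih =>
    have hsingle : ∀ k, j + 1 ≤ k → k ≤ j + 1 → f k ≠ 0 := fun k h1 h2 => by
      rwa [le_antisymm h2 h1]
    by_cases hj0 : j = 0
    · subst hj0
      exact ⟨1, le_rfl, le_rfl, hsingle, Or.inl rfl⟩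
    by_cases hfj' : f j = 0
    · exact ⟨j + 1, by omega, le_rfl, hsingle, Or.inr hfj'⟩
    obtain ⟨i, hi1, hij, hsupp, hleft⟩ := ih (by omega) hfj'
    refine ⟨i, hi1, by omega, fun k hik hkj => ?_, hleft⟩
    rcases Nat.lt_or_ge k (j + 1) with hk | hk
    · exact hsupp k hik (by omega)
    · exact hsingle k hk hkj

lemma mem_Rset_of_succ_eq_zero {j : ℕ} (hj : 1 ≤ j) (hfj : f j ≠ 0) (hfj' : f (j + 1) = 0) :
    j ∈ Rset f := by
  obtain ⟨i, hi1, hij, hsupp, hleft⟩ := exists_spread_left_end hj hfj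
  exact ⟨i, j, ⟨hi1, hij, hsupp, hleft, hfj'⟩, hij, le_rfl, by simp⟩

lemma IsFreq.Rset_nonempty (hf : IsFreq f) (hne : f ≠ zeroF) : (Rset f).Nonempty := by
  obtain ⟨j, hj, hmax⟩ := hf.2.exists_maximal (Function.support_nonempty_iff.2 hne)
  have hj1 : 1 ≤ j := Nat.one_le_iff_ne_zero.2 fun h => hj (h ▸ hf.1)
  have hfj' : f (j + 1) = 0 := by
    by_contra h
    have := hmax h (Nat.le_succ j)
    omega
  exact ⟨j, mem_Rset_of_succ_eq_zero hj1 hj hfj'⟩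

lemma IsFreq.exists_forall_ge_eq_zero (hf : IsFreq f) : ∃ N, ∀ n, N ≤ n → f n = 0 := by
  obtain ⟨M, hM⟩ := hf.2.bddAbove
  refine ⟨M + 1, fun n hn => ?_⟩
  by_contra h
  have := hM h
  omega

lemma dB_eq_zero_of_forall_ge {N : ℕ} (hN : ∀ n, N ≤ n → f n = 0) (n : ℕ) (hn : N ≤ n) :
    dB f n = 0 := by
  have hR : ∀ m, N ≤ m → m ∉ Rset f := fun m hm h =>
    (one_le_and_ne_zero_of_mem_Rset h).2 (hN m hm)
  simp [dB, hN n hn, hR n hn, hR (n + 1) (by omega)]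

lemma isFreq_dB (hf : IsFreq f) : IsFreq (dB f) := by
  obtain ⟨N, hN⟩ := hf.exists_forall_ge_eq_zero
  refine ⟨by simp [dB], (Set.finite_Iio N).subset fun n hn => ?_⟩
  by_contra h
  exact hn (dB_eq_zero_of_forall_ge hN n (not_lt.1 h))

lemma fsize_eq_sum_range {N : ℕ} (hN : ∀ n, N ≤ n → f n = 0) :
    fsize f = ∑ n ∈ range N, n * f n :=
  finsum_eq_sum_of_support_subset _ fun n hn => by
    by_contra h
    exact hn (by simp [hN n (by simpa using h)])

lemma mu2_eq_sum_range {N : ℕ} (hN : ∀ n, N ≤ n → f n = 0) :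
    mu2 f = ∑ n ∈ range N, if n ∈ Rset f then 1 else 0 := by
  have hR : Rset f = ↑((range N).filter (· ∈ Rset f)) := by
    ext n
    simp only [coe_filter, mem_range, Set.mem_ofPred_eq, iff_and_self]
    intro h
    by_contra hn
    exact (one_le_and_ne_zero_of_mem_Rset h).2 (hN n (not_lt.1 hn))
  rw [← card_filter, ← Set.ncard_coe_finset, ← hR, mu2]

lemma fsize_dB_add_mu2 (hf : IsFreq f) : fsize (dB f) + mu2 f = fsize f := by
  obtain ⟨N, hN⟩ := hf.exists_forall_ge_eq_zero
  set χ : ℕ → ℕ := fun n => if n ∈ Rset f then 1 else 0 with hχ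
  have hχ_le : ∀ n, χ n ≤ f n := fun n => by
    by_cases h : n ∈ Rset f
    · simpa [hχ, h, Nat.one_le_iff_ne_zero] using (one_le_and_ne_zero_of_mem_Rset h).2
    · simp [hχ, h]
  have hχ0 : χ 0 = 0 := by simpa [hf.1] using hχ_le 0
  have hχN : χ N = 0 := by simpa [hN N le_rfl] using hχ_le N
  have hpoint : ∀ n, n * dB f n + n * χ n + χ (n + 1) = n * f n + (n + 1) * χ (n + 1) := by
    intro n
    rcases Nat.eq_zero_or_pos n with rfl | hn
    · simp
    have hdB : dB f n + χ n = f n + χ (n + 1) := by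
      have : dB f n = f n - χ n + χ (n + 1) := if_neg hn.ne'
      have := hχ_le n
      omega
    calc n * dB f n + n * χ n + χ (n + 1) = n * (dB f n + χ n) + χ (n + 1) := by ring
      _ = n * f n + (n + 1) * χ (n + 1) := by rw [hdB]; ring
  have hsum := sum_congr rfl fun n (_ : n ∈ range N) => hpoint n
  simp only [sum_add_distrib] at hsum
  rw [sum_range_succ_eq_sum_range (g := fun n => n * χ n) (by simp) (by simp [hχN]),
    sum_range_succ_eq_sum_range hχ0 hχN] at hsum
  have hmu : mu2 f = ∑ n ∈ range N, χ n := mu2_eq_sum_range hN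
  rw [fsize_eq_sum_range (dB_eq_zero_of_forall_ge hN), hmu, fsize_eq_sum_range hN]
  omega

lemma mu2_pos (hf : IsFreq f) (hne : f ≠ zeroF) : 0 < mu2 f :=
  (Set.ncard_pos (hf.2.subset fun _ h => (one_le_and_ne_zero_of_mem_Rset h).2)).2
    (hf.Rset_nonempty hne)

lemma exists_iterate_dB_eq_zeroF (hf : IsFreq f) : ∃ m, dB^[m] f = zeroF := by
  induction hs : fsize f using Nat.strong_induction_on generalizing f with
  | _ s ih =>
    by_cases hne : f = zeroF
    · exact ⟨0, hne⟩
    have hlt : fsize (dB f) < s := by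
      have := fsize_dB_add_mu2 hf
      have := mu2_pos hf hne
      omega
    obtain ⟨m, hm⟩ := ih _ hlt (isFreq_dB hf) rfl
    exact ⟨m + 1, hm⟩

lemma chainK_eq_chainK_dB_add_one (hf : IsFreq f) (hne : f ≠ zeroF) :
    chainK f = chainK (dB f) + 1 := by
  rw [chainK, dif_pos (exists_iterate_dB_eq_zeroF hf), chainK,
    dif_pos (exists_iterate_dB_eq_zeroF (isFreq_dB hf))]
  exact Nat.find_comp_succ _ _ hne

lemma burgeCode_dB (hf : IsFreq f) (hne : f ≠ zeroF) :
    burgeCode (dB f) = (burgeCode f).tail := by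
  rw [burgeCode, burgeCode, chainK_eq_chainK_dB_add_one hf hne,
    List.range_succ_eq_map (n := chainK (dB f) + 1),
    List.map_cons, List.map_map, List.tail_cons]
  rfl

end Demotion

lemma descSet_tail (w : List Bool) : descSet w.tail = {j | 1 ≤ j ∧ j + 1 ∈ descSet w} := by
  ext j
  rcases j with _ | j
  · simp [descSet]
  · simp [descSet, List.getElem?_tail]

/-- if `Ω(f) = ω₁ω₂⋯ω_n` then `Ω(∂f) = ω₂⋯ω_n`; consequently
`Des(∂P) = (Des(P) - 1) \ {0}`. -/
theorem stmt12 (f : ℕ → ℕ) (hf : IsFreq f) (hne : f ≠ zeroF) :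
    burgeCode (dB f) = (burgeCode f).tail ∧
    DesSet (dB f) = {j | 1 ≤ j ∧ j + 1 ∈ DesSet f} := by
  have hcode := burgeCode_dB hf hne
  exact ⟨hcode, by rw [DesSet, hcode, descSet_tail]; rfl⟩
end
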